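/- arXiv:2404.17175 — 2 statements merged into one kernel-verified Lean document; each statement's English description precedes it below -/
import Mathlib

section
/- Let N ≥ 1 and let f : Fin N → ℂ. There exists a vector θ : Fin N → ℂ with |θ_n| = 1 for every n such that ∑_{n} conj(θ_n) · f_n = 0 if and only if 2 · max_n |f_n| ≤ ∑_n |f_n|. -/
/-!
The triangle inequality gives necessity. Conversely, after rotating each `f n` onto the real
axis it suffices to find unit phases `w n` with `∑ ‖f n‖ * w n = 0`. Let `x` be the largest
weight and `s` the total. A subset of the remaining weights that is maximal among those with
sum `y ≤ s/2` has `y ≥ s/2 - x`, so `x`, `y` and the sum `z = s - x - y` of the rest satisfy the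
triangle inequalities. A triangle with these side lengths closes up, so giving each weight the
phase of its side does the job.
-/

open Finset Complex ComplexConjugate

theorem two_mul_norm_le_sum_norm_of_sum_eq_zero {ι E : Type*} [SeminormedAddCommGroup E]
    [Fintype ι] [DecidableEq ι] (g : ι → E) (hg : ∑ n, g n = 0) (i : ι) :
    2 * ‖g i‖ ≤ ∑ n, ‖g n‖ := by
  have hsplit := add_sum_erase univ g (mem_univ i)
  have hsplit_norm := add_sum_erase univ (‖g ·‖) (mem_univ i)
  have : ‖g i‖ ≤ ∑ n ∈ univ.erase i, ‖g n‖ := calc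
    ‖g i‖ = ‖∑ n ∈ univ.erase i, g n‖ := by
      rw [eq_neg_of_add_eq_zero_left (hsplit.trans hg), norm_neg]
    _ ≤ _ := norm_sum_le _ _
  linarith

theorem Finset.exists_subset_sum_mem_Icc {ι : Type*} [DecidableEq ι] (s : Finset ι) (a : ι → ℝ)
    {M t : ℝ} (hM : ∀ i ∈ s, a i ≤ M) (hM₀ : 0 ≤ M) (ht₀ : 0 ≤ t) (ht : t ≤ ∑ i ∈ s, a i) :
    ∃ T ⊆ s, t - M ≤ ∑ i ∈ T, a i ∧ ∑ i ∈ T, a i ≤ t := by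
  obtain ⟨T, hT, hTmax⟩ := exists_max_image (s.powerset.filter (∑ i ∈ ·, a i ≤ t)) card
    ⟨∅, by simpa using ht₀⟩
  rw [mem_filter, mem_powerset] at hT
  refine ⟨T, hT.1, ?_, hT.2⟩
  by_cases hTs : T = s
  · linarith [hTs ▸ ht]
  -- a cardinality-maximal `T` cannot absorb any further element
  obtain ⟨e, hes, heT⟩ := exists_of_ssubset (ssubset_of_subset_of_ne hT.1 hTs)
  have hins : ¬ ∑ i ∈ insert e T, a i ≤ t := fun hle => by
    have := hTmax (insert e T) (mem_filter.2 ⟨mem_powerset.2 (insert_subset hes hT.1), hle⟩)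
    rw [card_insert_of_notMem heT] at this
    omega
  rw [sum_insert heT] at hins
  linarith [hM e hes]

theorem exists_norm_one_norm_add_mul_eq (x y z : ℝ) (h₁ : |x - y| ≤ z) (h₂ : z ≤ |x + y|) :
    ∃ u : ℂ, ‖u‖ = 1 ∧ ‖(x + y * u : ℂ)‖ = z := by
  -- on the upper unit half-circle `‖x + y * u‖` runs from `|x + y|` to `|x - y|`
  have hcont : ContinuousOn (fun φ : ℝ => ‖(x + y * exp (φ * I) : ℂ)‖) (Set.Icc 0 Real.pi) := by
    fun_prop
  have hz : z ∈ Set.Icc ‖(x + y * exp (Real.pi * I) : ℂ)‖ ‖(x + y * exp (0 * I) : ℂ)‖ := by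
    simp only [exp_pi_mul_I, zero_mul, exp_zero, mul_neg_one, mul_one, ← sub_eq_add_neg,
      ← ofReal_sub, ← ofReal_add, norm_real, Real.norm_eq_abs]
    exact ⟨h₁, h₂⟩
  obtain ⟨φ, -, hφ⟩ := intermediate_value_Icc' Real.pi_pos.le hcont hz
  exact ⟨exp (φ * I), norm_exp_ofReal_mul_I φ, hφ⟩

theorem exists_add_mul_add_mul_eq_zero (x y z : ℝ) (h₁ : |x - y| ≤ z) (h₂ : z ≤ |x + y|) :
    ∃ u v : ℂ, ‖u‖ = 1 ∧ ‖v‖ = 1 ∧ (x + y * u + z * v : ℂ) = 0 := by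
  obtain ⟨u, hu, hxyu⟩ := exists_norm_one_norm_add_mul_eq x y z h₁ h₂
  rcases (abs_nonneg _).trans h₁ |>.eq_or_lt with rfl | hz
  · exact ⟨u, 1, hu, norm_one, by simpa using hxyu⟩
  have hz' : (z : ℂ) ≠ 0 := ofReal_ne_zero.2 hz.ne'
  refine ⟨u, -((x + y * u) / z), hu, ?_, ?_⟩
  · rw [norm_neg, norm_div, hxyu, norm_real, Real.norm_of_nonneg hz.le, div_self hz.ne']
  · field_simp
    ring

theorem exists_unit_sum_mul_eq_zero {ι : Type*} [Fintype ι] [DecidableEq ι] (a : ι → ℝ)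
    (ha : ∀ n, 0 ≤ a n) (i₀ : ι) (hmax : ∀ n, a n ≤ a i₀) (h : 2 * a i₀ ≤ ∑ n, a n) :
    ∃ w : ι → ℂ, (∀ n, ‖w n‖ = 1) ∧ ∑ n, a n * w n = 0 := by
  set s := univ.erase i₀
  have hs : a i₀ + ∑ n ∈ s, a n = ∑ n, a n := add_sum_erase _ _ (mem_univ i₀)
  obtain ⟨T, hTs, hT₁, hT₂⟩ := s.exists_subset_sum_mem_Icc a (fun n _ => hmax n) (ha i₀)
    (by linarith [ha i₀]) (by linarith : (∑ n, a n) / 2 ≤ ∑ n ∈ s, a n)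
  have hsplit : ∑ n ∈ s \ T, a n + ∑ n ∈ T, a n = ∑ n ∈ s, a n := sum_sdiff hTs
  obtain ⟨u, v, hu, hv, huv⟩ := exists_add_mul_add_mul_eq_zero (a i₀) (∑ n ∈ T, a n)
    (∑ n ∈ s \ T, a n) (abs_sub_le_iff.2 ⟨by linarith, by linarith⟩)
    (le_abs.2 (Or.inl (by linarith)))
  set w : ι → ℂ := fun n => if n = i₀ then 1 else if n ∈ T then u else v
  have hwT : ∀ n ∈ T, w n = u := fun n hn => by simp [w, ne_of_mem_erase (hTs hn), hn]
  have hwR : ∀ n ∈ s \ T, w n = v := fun n hn => by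
    rw [mem_sdiff] at hn
    simp [w, ne_of_mem_erase hn.1, hn.2]
  refine ⟨w, fun n => by simp only [w]; split_ifs <;> simp [hu, hv], ?_⟩
  have hsumT : ∑ n ∈ T, a n * w n = (∑ n ∈ T, a n : ℝ) * u := by
    push_cast
    rw [sum_mul]
    exact sum_congr rfl fun n hn => by rw [hwT n hn]
  have hsumR : ∑ n ∈ s \ T, a n * w n = (∑ n ∈ s \ T, a n : ℝ) * v := by
    push_cast
    rw [sum_mul]
    exact sum_congr rfl fun n hn => by rw [hwR n hn]
  rw [← add_sum_erase _ _ (mem_univ i₀), ← sum_sdiff hTs, hsumT, hsumR]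
  simp only [w, if_pos rfl]
  linear_combination huv

theorem exists_unit_conj_mul_eq (z w : ℂ) (hw : ‖w‖ = 1) :
    ∃ θ : ℂ, ‖θ‖ = 1 ∧ conj θ * z = ‖z‖ * w := by
  set e := exp (arg z * I)
  have he : conj e * e = 1 := by rw [conj_mul', norm_exp_ofReal_mul_I]; simp
  refine ⟨e * conj w, by simp [e, hw, norm_exp_ofReal_mul_I], ?_⟩
  rw [map_mul, conj_conj]
  linear_combination (-conj e * w) * norm_mul_exp_arg_mul_I z + (‖z‖ * w : ℂ) * he

/-- Lemma 1 (feasibility of zero-forcing with unit-modulus RIS phase shifts):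
there exists a unit-modulus vector `θ` with `θᴴ f = 0` iff `2‖f‖_∞ ≤ ‖f‖₁`. -/
theorem zf_feasibility (N : ℕ) (hN : 1 ≤ N) (f : Fin N → ℂ) :
    (∃ θ : Fin N → ℂ, (∀ n, ‖θ n‖ = 1) ∧
        ∑ n, (starRingEnd ℂ) (θ n) * f n = 0) ↔
      2 * Finset.univ.sup' (Finset.univ_nonempty_iff.mpr ⟨⟨0, hN⟩⟩)
          (fun n => ‖f n‖) ≤ ∑ n, ‖f n‖ := by
  obtain ⟨i₀, -, hi₀⟩ := exists_mem_eq_sup' (univ_nonempty_iff.mpr ⟨⟨0, hN⟩⟩) (‖f ·‖)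
  rw [hi₀]
  constructor
  · rintro ⟨θ, hθ, hsum⟩
    simpa [hθ] using two_mul_norm_le_sum_norm_of_sum_eq_zero _ hsum i₀
  · intro h
    obtain ⟨w, hw, hsum⟩ := exists_unit_sum_mul_eq_zero (‖f ·‖) (fun n => norm_nonneg _) i₀
      (fun n => hi₀ ▸ le_sup' (‖f ·‖) (mem_univ n)) h
    choose θ hθ hθf using fun n => exists_unit_conj_mul_eq (f n) (w n) (hw n)
    exact ⟨θ, hθ, by simpa only [hθf] using hsum⟩
end

section
/- Let A_s ⊆ ℂ be a finite set closed under negation and containing some element s₀ with |s₀| = 1, let A_c = {1, −1} ⊆ ℂ, and let h, r ∈ ℂ. Define x(s, c) := h·s + r·s·c for s ∈ A_s, c ∈ A_c. Then the minimum squared Euclidean distance over distinct primary symbols, min over {(s_i, c_m, s_j, c_k) ∈ A_s × A_c × A_s × A_c : s_i ≠ s_j} of |x(s_i, c_m) − x(s_j, c_k)|², is at most 4|h|², for every value of r. -/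
/-! When `s_i c_m = s_j c_k` the reflecting-link terms `r s_i c_m` and `r s_j c_k` cancel, so the
composite symbols differ by `h (s_i - s_j)` alone. Taking `s_j = -s_i` and `c_k = -c_m` with
`|s_i| = 1` gives a pair of distinct primary symbols at squared distance `|2h|² = 4|h|²`,
whatever `r` is. -/

lemma composite_sub_of_mul_eq {R : Type*} [CommRing R] (h r : R) {si sj cm ck : R}
    (hsc : si * cm = sj * ck) :
    (h * si + r * si * cm) - (h * sj + r * sj * ck) = h * (si - sj) := by
  linear_combination r * hsc

lemma norm_sq_mul_sub_neg {h s : ℂ} (hs : ‖s‖ = 1) : ‖h * (s - -s)‖ ^ 2 = 4 * ‖h‖ ^ 2 := by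
  rw [sub_neg_eq_add, ← two_mul, norm_mul, norm_mul, hs]
  norm_num
  ring

/-- BER error floor (Fundamental problem 2): for the conventional scheme the
composite signal is `x(s,c) = h·s + r·s·c`, and the minimum squared Euclidean
distance over pairs with distinct primary symbols is at most `4|h|²`,
independently of the reflecting-link coefficient `r`. -/
theorem ber_error_floor (As : Finset ℂ)
    (hneg : ∀ s ∈ As, -s ∈ As) (h1 : ∃ s ∈ As, ‖s‖ = 1)
    (h r : ℂ) :
    sInf {x : ℝ | ∃ si ∈ As, ∃ sj ∈ As,
        ∃ cm ∈ ({1, -1} : Finset ℂ), ∃ ck ∈ ({1, -1} : Finset ℂ),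
        si ≠ sj ∧
          x = ‖(h * si + r * si * cm) - (h * sj + r * sj * ck)‖ ^ 2}
      ≤ 4 * ‖h‖ ^ 2 := by
  obtain ⟨s, hs, hs1⟩ := h1
  have hs0 : s ≠ 0 := norm_ne_zero_iff.mp (by rw [hs1]; exact one_ne_zero)
  refine csInf_le ⟨0, ?_⟩ ⟨s, hs, -s, hneg s hs, 1, by simp, -1, by simp, ?_, ?_⟩
  · rintro _ ⟨_, _, _, _, _, _, _, _, _, rfl⟩
    positivity
  · exact fun hs_neg => hs0 (self_eq_neg.mp hs_neg)
  · rw [composite_sub_of_mul_eq h r (by ring), norm_sq_mul_sub_neg hs1]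
end
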